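/- arXiv:2202.01836 — 3 statements merged into one kernel-verified Lean document; each statement's English description precedes it below -/
import Mathlib

section
/- Let q ∈ [0,1) and α, β > 0, γ, δ ≥ 0. Let M be a real vector space, D, E : M → M linear maps, W : M → ℝ a linear functional, and V ∈ M, satisfying the DEHP algebra relations: D∘E − q·(E∘D) = D + E, W∘(α·E − γ·D) = W, and (β·D − δ·E)(V) = V. For each N ≥ 1 define f_N : {0,1}^N → ℝ by f_N(τ) := W( (τ₁D + (1−τ₁)E)∘(τ₂D + (1−τ₂)E)∘⋯∘(τ_N D + (1−τ_N)E) (V) ), the composition ordered left to right by increasing index. Then L* f_N(τ) = 0 for every N ≥ 1 and every τ ∈ {0,1}^N, where L* is the open ASEP adjoint generator. -/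
open Finset

/-- Boundary part of the open ASEP adjoint generator at the left reservoir (site 1). -/
noncomputable def Lleft {n : ℕ} (α γ : ℝ) (f : (Fin (n + 1) → Bool) → ℝ)
    (τ : Fin (n + 1) → Bool) : ℝ :=
  if τ 0 = false then γ * f (Function.update τ 0 true) - α * f τ
  else α * f (Function.update τ 0 false) - γ * f τ

/-- Bulk part of the open ASEP adjoint generator on the bond `(i, i+1)`. -/
noncomputable def Lbulk {n : ℕ} (q : ℝ) (f : (Fin (n + 1) → Bool) → ℝ)
    (τ : Fin (n + 1) → Bool) (i : Fin n) : ℝ :=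
  if τ i.castSucc = false ∧ τ i.succ = true then
    f (Function.update (Function.update τ i.castSucc true) i.succ false) - q * f τ
  else if τ i.castSucc = true ∧ τ i.succ = false then
    q * f (Function.update (Function.update τ i.castSucc false) i.succ true) - f τ
  else 0

/-- Boundary part of the open ASEP adjoint generator at the right reservoir (site N). -/
noncomputable def Lright {n : ℕ} (β δ : ℝ) (f : (Fin (n + 1) → Bool) → ℝ)
    (τ : Fin (n + 1) → Bool) : ℝ :=
  if τ (Fin.last n) = false then β * f (Function.update τ (Fin.last n) true) - δ * f τ
  else δ * f (Function.update τ (Fin.last n) false) - β * f τ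

/-- The open ASEP adjoint generator `L* = L*_ℓ + ∑ᵢ L*_{i,i+1} + L*_r` on `{0,1}^N`,
`N = n+1`. -/
noncomputable def Lstar {n : ℕ} (q α β γ δ : ℝ) (f : (Fin (n + 1) → Bool) → ℝ)
    (τ : Fin (n + 1) → Bool) : ℝ :=
  Lleft α γ f τ + (∑ i : Fin n, Lbulk q f τ i) + Lright β δ f τ

/-- The matrix product `(τ₁ D + (1-τ₁) E) ∘ ⋯ ∘ (τ_N D + (1-τ_N) E)` applied to `V`,
ordered left to right by increasing index. -/
noncomputable def mpaProduct {n : ℕ} {M : Type*} [AddCommGroup M] [Module ℝ M]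
    (D E : M →ₗ[ℝ] M) (τ : Fin (n + 1) → Bool) (V : M) : M :=
  (List.finRange (n + 1)).foldr (fun i v => (if τ i then D else E) v) V

/-!
Write `X₁ = D`, `X₀ = E` and let `D̂ = -1`, `Ê = 1`. The DEHP relations say that every local
piece of `L*` applied to `f(τ) = W(X_{τ₁} ⋯ X_{τ_N} V)` replaces one factor by its hat: the left
boundary term is `-τ̂₁ W(X_{τ₂} ⋯ V)`, the bond `(i, i+1)` term is the difference of the words with
`τ̂ᵢ X_{τᵢ₊₁}` and `X_{τᵢ} τ̂ᵢ₊₁` in slots `i, i+1`, and the right boundary term is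
`τ̂_N W(X_{τ₁} ⋯ X_{τ_{N-1}} V)`, so the sum telescopes to `0`. Peeling off the first site, the bulk
and right boundary terms add up to `τ̂₁ W(X_{τ₂} ⋯ V)`, by induction on `N` with `W` replaced by
`W ∘ X_{τ₁}`.
-/

open Function

section Generator

variable {n : ℕ}

theorem Lright_cons (β δ : ℝ) (f : (Fin (n + 2) → Bool) → ℝ) (a : Bool)
    (τ : Fin (n + 1) → Bool) :
    Lright β δ f (Fin.cons a τ) = Lright β δ (fun σ => f (Fin.cons a σ)) τ := by
  simp only [Lright, ← Fin.succ_last, Fin.cons_succ, ← Fin.cons_update]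

theorem Lbulk_cons_succ (q : ℝ) (f : (Fin (n + 2) → Bool) → ℝ) (a : Bool)
    (τ : Fin (n + 1) → Bool) (i : Fin n) :
    Lbulk q f (Fin.cons a τ) i.succ = Lbulk q (fun σ => f (Fin.cons a σ)) τ i := by
  simp only [Lbulk, ← Fin.succ_castSucc, Fin.cons_succ, ← Fin.cons_update]

end Generator

section MatrixProduct

variable {M : Type*} [AddCommGroup M] [Module ℝ M] (D E : M →ₗ[ℝ] M) {n : ℕ}

/-- `mpaProduct` for words of any length, including the empty word. -/
noncomputable def mpaVec {m : ℕ} (τ : Fin m → Bool) (V : M) : M :=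
  (List.finRange m).foldr (fun i v => (if τ i then D else E) v) V

theorem mpaProduct_eq_mpaVec (τ : Fin (n + 1) → Bool) (V : M) :
    mpaProduct D E τ V = mpaVec D E τ V := rfl

@[simp]
theorem mpaVec_elim0 (τ : Fin 0 → Bool) (V : M) : mpaVec D E τ V = V := rfl

@[simp]
theorem mpaVec_cons (a : Bool) (τ : Fin n → Bool) (V : M) :
    mpaVec D E (Fin.cons a τ) V = (if a then D else E) (mpaVec D E τ V) := by
  simp [mpaVec, List.finRange_succ, List.foldr_map]

/-- The scalars `D̂ = -1`, `Ê = 1` of the DEHP cancellation mechanism. -/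
def mpaHat (a : Bool) : ℝ := if a then -1 else 1

end MatrixProduct

section Cancellation

variable {M : Type*} [AddCommGroup M] [Module ℝ M] {D E : M →ₗ[ℝ] M} {n : ℕ}

theorem Lleft_mpa {α γ : ℝ} {W : M →ₗ[ℝ] ℝ} (hW : W ∘ₗ (α • E - γ • D) = W) (V : M)
    (a : Bool) (σ : Fin n → Bool) :
    Lleft α γ (fun τ => W (mpaVec D E τ V)) (Fin.cons a σ)
      = -(mpaHat a * W (mpaVec D E σ V)) := by
  have h := LinearMap.congr_fun hW (mpaVec D E σ V)
  simp only [LinearMap.comp_apply, LinearMap.sub_apply, LinearMap.smul_apply, map_sub,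
    map_smul, smul_eq_mul] at h
  cases a <;>
    simp only [Lleft, Fin.cons_zero, Bool.true_eq_false, Bool.false_eq_true, ↓reduceIte,
      Fin.update_cons_zero, mpaVec_cons, mpaHat, neg_mul, one_mul, neg_neg] <;>
    linarith

theorem Lright_mpa_single_site {β δ : ℝ} {V : M} (hV : (β • D - δ • E) V = V)
    (W : M →ₗ[ℝ] ℝ) (a : Bool) (σ : Fin 0 → Bool) :
    Lright β δ (fun τ => W (mpaVec D E τ V)) (Fin.cons a σ) = mpaHat a * W V := by
  have h := congrArg W hV
  simp only [LinearMap.sub_apply, LinearMap.smul_apply, map_sub, map_smul, smul_eq_mul] at h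
  have hlast : Fin.last 0 = 0 := rfl
  cases a <;>
    simp only [Lright, hlast, Fin.cons_zero, Bool.true_eq_false, Bool.false_eq_true, ↓reduceIte,
      Fin.update_cons_zero, mpaVec_cons, mpaVec_elim0, mpaHat, neg_mul, one_mul] <;>
    linarith

theorem Lbulk_mpa_zero {q : ℝ} (hDE : D ∘ₗ E - q • (E ∘ₗ D) = D + E) (W : M →ₗ[ℝ] ℝ)
    (V : M) (a b : Bool) (σ : Fin n → Bool) :
    Lbulk q (fun τ => W (mpaVec D E τ V)) (Fin.cons a (Fin.cons b σ)) 0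
      = mpaHat a * W ((if b then D else E) (mpaVec D E σ V))
        - mpaHat b * W ((if a then D else E) (mpaVec D E σ V)) := by
  have h := congrArg W (LinearMap.congr_fun hDE (mpaVec D E σ V))
  simp only [LinearMap.comp_apply, LinearMap.sub_apply, LinearMap.add_apply,
    LinearMap.smul_apply, map_sub, map_add, map_smul, smul_eq_mul] at h
  have hupd (s t : Bool) :
      update (Fin.cons s (Fin.cons b σ) : Fin (n + 2) → Bool) 1 t = Fin.cons s (Fin.cons t σ) := by
    rw [← Fin.succ_zero_eq_one, ← Fin.cons_update, Fin.update_cons_zero]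
  cases a <;> cases b <;>
    simp only [Lbulk, Fin.castSucc_zero, Fin.cons_zero, Fin.succ_zero_eq_one, Fin.cons_one,
      Bool.true_eq_false, Bool.false_eq_true, and_self, and_true, and_false, ↓reduceIte,
      Fin.update_cons_zero, hupd, mpaVec_cons, mpaHat, neg_mul, one_mul, sub_neg_eq_add,
      sub_self] <;>
    linarith

theorem sum_Lbulk_add_Lright_mpa {q β δ : ℝ} {V : M}
    (hDE : D ∘ₗ E - q • (E ∘ₗ D) = D + E) (hV : (β • D - δ • E) V = V) :
    ∀ {n : ℕ} (W : M →ₗ[ℝ] ℝ) (a : Bool) (σ : Fin n → Bool),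
      (∑ i : Fin n, Lbulk q (fun τ => W (mpaVec D E τ V)) (Fin.cons a σ) i)
        + Lright β δ (fun τ => W (mpaVec D E τ V)) (Fin.cons a σ)
        = mpaHat a * W (mpaVec D E σ V)
  | 0, W, a, σ => by simp [Lright_mpa_single_site hV]
  | n + 1, W, a, σ => by
    refine Fin.consCases (fun b σ => ?_) σ
    have ih := sum_Lbulk_add_Lright_mpa hDE hV (W ∘ₗ (if a then D else E)) b σ
    simp only [LinearMap.comp_apply] at ih
    simp only [Fin.sum_univ_succ, Lbulk_cons_succ, Lright_cons, mpaVec_cons, add_assoc, ih,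
      Lbulk_mpa_zero hDE]
    ring

end Cancellation

theorem mpa_stationary_general {M : Type*} [AddCommGroup M] [Module ℝ M]
    (q α β γ δ : ℝ)
    (D E : M →ₗ[ℝ] M) (W : M →ₗ[ℝ] ℝ) (V : M)
    (hDE : D ∘ₗ E - q • (E ∘ₗ D) = D + E)
    (hW : W ∘ₗ (α • E - γ • D) = W)
    (hV : (β • D - δ • E) V = V) :
    ∀ (n : ℕ) (τ : Fin (n + 1) → Bool),
      Lstar q α β γ δ (fun σ => W (mpaProduct D E σ V)) τ = 0 := by
  intro n τ
  refine Fin.consCases (fun a σ => ?_) τ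
  simp only [Lstar, mpaProduct_eq_mpaVec, add_assoc, sum_Lbulk_add_Lright_mpa hDE hV,
    Lleft_mpa hW]
  ring

/-- Matrix product ansatz (Derrida–Evans–Hakim–Pasquier): any representation of the
DEHP algebra `DE - qED = D + E`, `W(αE - γD) = W`, `(βD - δE)V = V` yields an
(unnormalized) stationary measure `f_N(τ) = ⟨W| ∏ᵢ (τᵢ D + (1-τᵢ) E) |V⟩` for open
ASEP: `L* f_N = 0` for every `N ≥ 1`. -/
theorem mpa_stationary {M : Type*} [AddCommGroup M] [Module ℝ M]
    (q α β γ δ : ℝ) (hq0 : 0 ≤ q) (hq1 : q < 1) (hα : 0 < α) (hβ : 0 < β)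
    (hγ : 0 ≤ γ) (hδ : 0 ≤ δ)
    (D E : M →ₗ[ℝ] M) (W : M →ₗ[ℝ] ℝ) (V : M)
    (hDE : D ∘ₗ E - q • (E ∘ₗ D) = D + E)
    (hW : W ∘ₗ (α • E - γ • D) = W)
    (hV : (β • D - δ • E) V = V) :
    ∀ (n : ℕ) (τ : Fin (n + 1) → Bool),
      Lstar q α β γ δ (fun σ => W (mpaProduct D E σ V)) τ = 0 :=
  mpa_stationary_general q α β γ δ D E W V hDE hW hV
end

section
/- Let q ∈ [0,1) and α, β > 0, γ, δ ≥ 0 with αβ ≠ γδ, and suppose (1−q)(α+δ)(β+γ) = (α+β+γ+δ)(αβ−γδ). Set d := (α+δ)/(αβ−γδ) and e := (β+γ)/(αβ−γδ), and for each N ≥ 1 define f_N : {0,1}^N → ℝ by f_N(τ) := ∏_{i=1}^N (τ_i d + (1−τ_i) e). Then L* f_N(τ) = 0 for every N ≥ 1 and every τ ∈ {0,1}^N; that is, the product measure proportional to f_N is stationary for open ASEP. -/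
open Finset

/-
For the product weight `f(τ) = ∏ᵢ w(τᵢ)` each local term of `L* f` is a difference of
"fluxes": with `Tₖ(τ) = ±∏_{j ≠ k} w(τⱼ)` (sign `+` for a particle at `k`), the left boundary
term is `T₁`, the bond `(i, i+1)` contributes `T_{i+1} - T_i` and the right boundary term is
`-T_N`, so the sum telescopes to zero. Each of these three identities is a one-site or two-site
polynomial identity in `w(1) = d` and `w(0) = e`: namely `γd - αe = -1`, `βd - δe = 1` and
`(1-q)de = d + e`. For `d = (α+δ)/(αβ-γδ)`, `e = (β+γ)/(αβ-γδ)` the first two hold identically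
and the third is the assumed relation divided by `(αβ-γδ)²`.
-/

theorem Fin.sum_succ_sub_castSucc {M : Type*} [AddCommGroup M] :
    ∀ {n : ℕ} (f : Fin (n + 1) → M),
      ∑ i : Fin n, (f i.succ - f i.castSucc) = f (Fin.last n) - f 0
  | 0, f => by simp
  | n + 1, f => by
    rw [Fin.sum_univ_castSucc]
    simp only [Fin.succ_castSucc, Fin.succ_last]
    rw [Fin.sum_succ_sub_castSucc fun j => f j.castSucc, Fin.castSucc_zero]
    abel

section ProductWeight

variable {ι : Type*} [Fintype ι] [DecidableEq ι] (w : Bool → ℝ)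

noncomputable def productWeight (τ : ι → Bool) : ℝ :=
  ∏ j, w (τ j)

noncomputable def siteFlux (τ : ι → Bool) (k : ι) : ℝ :=
  (if τ k then 1 else -1) * ∏ j ∈ univ.erase k, w (τ j)

theorem productWeight_update (τ : ι → Bool) (k : ι) (b : Bool) :
    productWeight w (Function.update τ k b) = w b * ∏ j ∈ univ.erase k, w (τ j) := by
  rw [productWeight, ← mul_prod_erase _ _ (mem_univ k), Function.update_self]
  congr 1
  exact prod_congr rfl fun j hj => by rw [Function.update_of_ne (ne_of_mem_erase hj)]

theorem productWeight_eq_mul_prod_erase (τ : ι → Bool) (k : ι) :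
    productWeight w τ = w (τ k) * ∏ j ∈ univ.erase k, w (τ j) := by
  rw [← productWeight_update, Function.update_eq_self]

theorem productWeight_update_update (τ : ι → Bool) {a b : ι} (hab : a ≠ b) (x y : Bool) :
    productWeight w (Function.update (Function.update τ a x) b y) =
      w x * w y * ∏ j ∈ (univ.erase a).erase b, w (τ j) := by
  rw [productWeight_update, ← mul_prod_erase _ _ (mem_erase.2 ⟨hab, mem_univ a⟩),
    Function.update_self, erase_right_comm]
  have hrest : ∏ j ∈ (univ.erase a).erase b, w (Function.update τ a x j) =
      ∏ j ∈ (univ.erase a).erase b, w (τ j) :=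
    prod_congr rfl fun j hj => by
      rw [Function.update_of_ne (ne_of_mem_erase (mem_of_mem_erase hj))]
  rw [hrest]
  ring

theorem siteFlux_eq_of_ne (τ : ι → Bool) {a b : ι} (hab : a ≠ b) :
    siteFlux w τ a =
      (if τ a then 1 else -1) * (w (τ b) * ∏ j ∈ (univ.erase a).erase b, w (τ j)) := by
  rw [siteFlux, ← mul_prod_erase _ _ (mem_erase.2 ⟨hab.symm, mem_univ b⟩)]

end ProductWeight

section Generator

variable {n : ℕ} {w : Bool → ℝ} (τ : Fin (n + 1) → Bool)

theorem Lleft_productWeight {α γ : ℝ} (h : γ * w true - α * w false = -1) :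
    Lleft α γ (productWeight w) τ = siteFlux w τ 0 := by
  rw [Lleft, siteFlux, productWeight_update, productWeight_update,
    productWeight_eq_mul_prod_erase w τ 0]
  cases τ 0
  · simp only [if_true, Bool.false_eq_true, if_false]
    linear_combination (∏ j ∈ univ.erase 0, w (τ j)) * h
  · simp only [if_true, Bool.true_eq_false, if_false]
    linear_combination -(∏ j ∈ univ.erase 0, w (τ j)) * h

theorem Lright_productWeight {β δ : ℝ} (h : β * w true - δ * w false = 1) :
    Lright β δ (productWeight w) τ = -siteFlux w τ (Fin.last n) := by
  rw [Lright, siteFlux, productWeight_update, productWeight_update,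
    productWeight_eq_mul_prod_erase w τ (Fin.last n)]
  cases τ (Fin.last n)
  · simp only [if_true, Bool.false_eq_true, if_false]
    linear_combination (∏ j ∈ univ.erase (Fin.last n), w (τ j)) * h
  · simp only [if_true, Bool.true_eq_false, if_false]
    linear_combination -(∏ j ∈ univ.erase (Fin.last n), w (τ j)) * h

theorem Lbulk_productWeight {q : ℝ} (h : (1 - q) * (w true * w false) = w true + w false)
    (i : Fin n) :
    Lbulk q (productWeight w) τ i = siteFlux w τ i.succ - siteFlux w τ i.castSucc := by
  have hne : i.castSucc ≠ i.succ := Fin.castSucc_lt_succ.ne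
  have hprod := productWeight_update_update w τ hne (τ i.castSucc) (τ i.succ)
  rw [Function.update_eq_self, Function.update_eq_self] at hprod
  rw [Lbulk, siteFlux_eq_of_ne w τ hne, siteFlux_eq_of_ne w τ hne.symm, erase_right_comm,
    productWeight_update_update w τ hne, productWeight_update_update w τ hne, hprod]
  set R := ∏ j ∈ (univ.erase i.castSucc).erase i.succ, w (τ j)
  cases τ i.castSucc <;> cases τ i.succ <;>
    simp only [if_true, if_false, Bool.false_eq_true, Bool.true_eq_false, and_true, and_false]
  · ring
  · linear_combination R * h
  · linear_combination -R * h
  · ring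

theorem Lstar_productWeight_eq_zero {q α β γ δ : ℝ}
    (hleft : γ * w true - α * w false = -1) (hright : β * w true - δ * w false = 1)
    (hbulk : (1 - q) * (w true * w false) = w true + w false) :
    Lstar q α β γ δ (productWeight w) τ = 0 := by
  rw [Lstar, Lleft_productWeight τ hleft, Lright_productWeight τ hright]
  simp only [Lbulk_productWeight τ hbulk, Fin.sum_succ_sub_castSucc]
  ring

end Generator

theorem bernoulli_product_stationary_general (q α β γ δ : ℝ)
    (hne : α * β ≠ γ * δ)
    (hsolv : (1 - q) * (α + δ) * (β + γ) = (α + β + γ + δ) * (α * β - γ * δ)) :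
    ∀ (n : ℕ) (τ : Fin (n + 1) → Bool),
      Lstar q α β γ δ
        (fun σ => ∏ i : Fin (n + 1),
          (if σ i then (α + δ) / (α * β - γ * δ) else (β + γ) / (α * β - γ * δ))) τ = 0 := by
  intro n τ
  set D := α * β - γ * δ
  have hD0 : D ≠ 0 := sub_ne_zero.mpr hne
  refine Lstar_productWeight_eq_zero (w := fun b => if b then (α + δ) / D else (β + γ) / D) τ
    ?left ?right ?bulk <;> simp only [if_true, Bool.false_eq_true, if_false] <;> field_simp
  case left => ring
  case right => ring
  case bulk => linear_combination hsolv

/-- If `(1-q)(α+δ)(β+γ) = (α+β+γ+δ)(αβ-γδ)` with `αβ ≠ γδ`, then the product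
measure with weights `f_N(τ) = ∏ᵢ (τᵢ d + (1-τᵢ) e)`, where `d = (α+δ)/(αβ-γδ)`
and `e = (β+γ)/(αβ-γδ)`, is stationary for open ASEP: `L* f_N = 0` for all `N ≥ 1`. -/
theorem bernoulli_product_stationary (q α β γ δ : ℝ) (hq0 : 0 ≤ q) (hq1 : q < 1)
    (hα : 0 < α) (hβ : 0 < β) (hγ : 0 ≤ γ) (hδ : 0 ≤ δ)
    (hne : α * β ≠ γ * δ)
    (hsolv : (1 - q) * (α + δ) * (β + γ) = (α + β + γ + δ) * (α * β - γ * δ)) :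
    ∀ (n : ℕ) (τ : Fin (n + 1) → Bool),
      Lstar q α β γ δ
        (fun σ => ∏ i : Fin (n + 1),
          (if σ i then (α + δ) / (α * β - γ * δ) else (β + γ) / (α * β - γ * δ))) τ = 0 :=
  bernoulli_product_stationary_general q α β γ δ hne hsolv
end

section
/- For u ∈ ℝ and r > 0 define K_{iu}(r) := ∫_0^∞ e^{−r cosh w} cos(uw) dw, and set f_u(x) := K_{iu}(e^x) for x ∈ ℝ. Then for every t ∈ ℂ with Re(t) > 0 and every u ∈ ℝ, ∫_{−∞}^{∞} e^{tx} f_u(x) dx = 2^{t−2} Γ((t+iu)/2) Γ((t−iu)/2), where Γ is the complex Gamma function and 2^{t−2} := exp((t−2) log 2). For real t > 0 the right-hand side equals 2^{t−2} |Γ((t+iu)/2)|². -/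
/-!
Substituting `r = eˣ` turns the left-hand side into the Mellin transform
`∫₀^∞ r^(t-1) K_{iu}(r) dr`. By Fubini and `∫₀^∞ r^(t-1) e^(-r cosh w) dr = Γ(t) (cosh w)^(-t)`
this is `Γ(t) ∫₀^∞ cos(uw) (cosh w)^(-t) dw = ½ Γ(t) ∫_ℝ e^(iuw) (cosh w)^(-t) dw`, and the
substitution `x = (1 + tanh w) / 2` turns the last integral into
`2^(t-1) B((t+iu)/2, (t-iu)/2)`. Finally `Γ(a + b) B(a, b) = Γ(a) Γ(b)`.
-/

open MeasureTheory

/-- The modified Bessel (Macdonald) function of purely imaginary order,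
`K_{iu}(r) = ∫_0^∞ e^{-r cosh w} cos(uw) dw` for `r > 0`. -/
noncomputable def Kiu (u r : ℝ) : ℝ :=
  ∫ w in Set.Ioi (0 : ℝ), Real.exp (-r * Real.cosh w) * Real.cos (u * w)

/-- `f_u(x) = K_{iu}(e^x)`. -/
noncomputable def besselF (u x : ℝ) : ℝ := Kiu u (Real.exp x)

open Set

lemma ofReal_cpow_eq_cexp_mul_log {x : ℝ} (hx : 0 < x) (s : ℂ) :
    (x : ℂ) ^ s = Complex.exp (s * Real.log x) := by
  rw [Complex.cpow_def_of_ne_zero (Complex.ofReal_ne_zero.mpr hx.ne'),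
    ← Complex.ofReal_log hx.le, mul_comm]

lemma norm_one_div_ofReal_cpow {c : ℝ} (hc : 0 < c) (s : ℂ) :
    ‖(1 / (c : ℂ)) ^ s‖ = (1 / c) ^ s.re := by
  rw [← Complex.norm_cpow_eq_rpow_re_of_pos (one_div_pos.mpr hc)]
  push_cast
  rfl

theorem integral_cexp_mul_comp_exp (g : ℝ → ℂ) (s : ℂ) :
    ∫ x : ℝ, Complex.exp (s * x) * g (Real.exp x) = mellin g s := by
  have hsub := integral_image_eq_integral_abs_deriv_smul MeasurableSet.univ
    (fun x _ => (Real.hasDerivAt_exp x).hasDerivWithinAt) Real.exp_injective.injOn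
    (fun r : ℝ => (r : ℂ) ^ (s - 1) • g r)
  rw [image_univ, Real.range_exp, setIntegral_univ] at hsub
  rw [mellin, hsub]
  congr 1 with x
  rw [abs_of_pos (Real.exp_pos x), ofReal_cpow_eq_cexp_mul_log (Real.exp_pos x), Real.log_exp,
    Complex.real_smul, smul_eq_mul, Complex.ofReal_exp, ← mul_assoc, ← Complex.exp_add]
  ring_nf

theorem mellinConvergent_cexp_neg_mul {c : ℝ} (hc : 0 < c) {s : ℂ} (hs : 0 < s.re) :
    MellinConvergent (fun r : ℝ => Complex.exp (-(c * r))) s := by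
  have hGamma : MellinConvergent (fun r : ℝ => Complex.exp (-(r : ℂ))) s :=
    (Complex.GammaIntegral_convergent hs).congr_fun
      (fun r _ => by simp only [smul_eq_mul, Complex.ofReal_exp, Complex.ofReal_neg, mul_comm])
      measurableSet_Ioi
  simpa only [Complex.ofReal_mul] using (MellinConvergent.comp_mul_left hc).mpr hGamma

theorem mellin_cexp_neg_mul {c : ℝ} (hc : 0 < c) {s : ℂ} (hs : 0 < s.re) :
    mellin (fun r : ℝ => Complex.exp (-(c * r))) s = (1 / (c : ℂ)) ^ s * Complex.Gamma s :=
  Complex.integral_cpow_mul_exp_neg_mul_Ioi hs hc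

theorem integral_norm_cpow_mul_cexp_neg_mul {c : ℝ} (hc : 0 < c) {s : ℂ} (hs : 0 < s.re) :
    ∫ r : ℝ in Ioi 0, ‖(r : ℂ) ^ (s - 1) * Complex.exp (-(c * r))‖ =
      ‖(1 / (c : ℂ)) ^ s‖ * Real.Gamma s.re := by
  rw [norm_one_div_ofReal_cpow hc, ← Real.integral_rpow_mul_exp_neg_mul_Ioi hs hc]
  refine setIntegral_congr_fun measurableSet_Ioi fun r (hr : 0 < r) => ?_
  rw [norm_mul, Complex.norm_cpow_eq_rpow_re_of_pos hr, Complex.norm_exp]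
  simp

theorem mellin_integral_mul_cexp_neg_mul {α : Type*} [MeasurableSpace α] {μ : Measure α}
    [SFinite μ] {g : α → ℂ} {φ : α → ℝ} (hg : Measurable g) (hφ : Measurable φ)
    (hφ_pos : ∀ w, 0 < φ w) {s : ℂ} (hs : 0 < s.re)
    (hint : Integrable (fun w => g w * (1 / (φ w : ℂ)) ^ s) μ) :
    mellin (fun r : ℝ => ∫ w, g w * Complex.exp (-(φ w * r)) ∂μ) s =
      Complex.Gamma s * ∫ w, g w * (1 / (φ w : ℂ)) ^ s ∂μ := by
  set H : ℝ → α → ℂ := fun r w => (r : ℂ) ^ (s - 1) * (g w * Complex.exp (-(φ w * r)))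
  have hH : Integrable (Function.uncurry H) ((volume.restrict (Ioi 0)).prod μ) := by
    refine (integrable_prod_iff' ?_).mpr ⟨ae_of_all _ fun w => ?_, ?_⟩
    · exact Measurable.aestronglyMeasurable (by fun_prop)
    · simpa only [H, Function.uncurry_apply_pair, smul_eq_mul, mul_left_comm _ (g w)]
        using ((mellinConvergent_cexp_neg_mul (hφ_pos w) hs).const_mul (g w))
    · refine (hint.norm.mul_const (Real.Gamma s.re)).congr (ae_of_all _ fun w => ?_)
      simp only [H, Function.uncurry_apply_pair, mul_left_comm _ (g w), norm_mul (g w)]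
      rw [integral_const_mul, integral_norm_cpow_mul_cexp_neg_mul (hφ_pos w) hs,
        mul_assoc]
  calc mellin (fun r : ℝ => ∫ w, g w * Complex.exp (-(φ w * r)) ∂μ) s
      = ∫ r in Ioi 0, ∫ w, H r w ∂μ := by
        simp only [mellin, H, smul_eq_mul, integral_const_mul]
    _ = ∫ w, (∫ r in Ioi (0 : ℝ), H r w) ∂μ := integral_integral_swap hH
    _ = ∫ w, Complex.Gamma s * (g w * (1 / (φ w : ℂ)) ^ s) ∂μ := by
        congr 1 with w
        simp only [H, mul_left_comm _ (g w), integral_const_mul]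
        have hΓ := mellin_cexp_neg_mul (hφ_pos w) hs
        simp only [mellin, smul_eq_mul] at hΓ
        rw [hΓ]
        ring
    _ = _ := integral_const_mul _ _

theorem integrable_of_even_of_integrableOn_Ioi {E : Type*} [NormedAddCommGroup E] {f : ℝ → E}
    (heven : ∀ x, f (-x) = f x) (hf : IntegrableOn f (Ioi 0)) : Integrable f := by
  have hIic : IntegrableOn f (Iic 0) := by
    simpa only [heven] using IntegrableOn.comp_neg_Iic (c := (0 : ℝ)) (f := f)
      (by rwa [neg_zero, integrableOn_Ici_iff_integrableOn_Ioi])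
  rw [← integrableOn_univ, ← Iic_union_Ioi (a := (0 : ℝ))]
  exact hIic.union hf

theorem integral_eq_integral_Ioi_add_comp_neg {E : Type*} [NormedAddCommGroup E]
    [NormedSpace ℝ E] {f : ℝ → E} (hf : Integrable f) :
    ∫ x, f x = ∫ x in Ioi 0, (f x + f (-x)) := by
  rw [integral_add hf.integrableOn hf.comp_neg.integrableOn, integral_comp_neg_Ioi, neg_zero,
    add_comm, intervalIntegral.integral_Iic_add_Ioi hf.integrableOn hf.integrableOn]

lemma one_div_cosh_le_two_mul_exp_neg_abs (w : ℝ) : 1 / Real.cosh w ≤ 2 * Real.exp (-|w|) := by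
  rw [div_le_iff₀ (Real.cosh_pos w), ← Real.cosh_abs, Real.cosh_eq]
  have h : Real.exp (-|w|) * Real.exp |w| = 1 := by
    rw [← Real.exp_add, neg_add_cancel, Real.exp_zero]
  nlinarith [sq_nonneg (Real.exp (-|w|))]

lemma norm_one_div_cosh_cpow_le {s : ℂ} (hs : 0 ≤ s.re) (w : ℝ) :
    ‖(1 / (Real.cosh w : ℂ)) ^ s‖ ≤ 2 ^ s.re * Real.exp (-(s.re * |w|)) := by
  rw [norm_one_div_ofReal_cpow (Real.cosh_pos w)]
  calc (1 / Real.cosh w) ^ s.re ≤ (2 * Real.exp (-|w|)) ^ s.re :=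
        Real.rpow_le_rpow (by positivity) (one_div_cosh_le_two_mul_exp_neg_abs w) hs
    _ = 2 ^ s.re * Real.exp (-(s.re * |w|)) := by
        rw [Real.mul_rpow zero_le_two (Real.exp_pos _).le, ← Real.exp_mul]
        ring_nf

theorem integrable_one_div_cosh_cpow {s : ℂ} (hs : 0 < s.re) :
    Integrable fun w : ℝ => (1 / (Real.cosh w : ℂ)) ^ s := by
  refine integrable_of_even_of_integrableOn_Ioi (fun w => by rw [Real.cosh_neg]) ?_
  refine Integrable.mono' ((exp_neg_integrableOn_Ioi 0 hs).const_mul (2 ^ s.re))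
    (Measurable.aestronglyMeasurable (by fun_prop)) ?_
  refine (ae_restrict_iff' measurableSet_Ioi).mpr (ae_of_all _ fun w (hw : 0 < w) => ?_)
  simpa [abs_of_pos hw] using norm_one_div_cosh_cpow_le hs.le w

lemma hasDerivAt_one_add_tanh_div_two (w : ℝ) :
    HasDerivAt (fun x => (1 + Real.tanh x) / 2) (2 / (2 * Real.cosh w) ^ 2) w := by
  have hc := (Real.cosh_pos w).ne'
  have h := (((Real.hasDerivAt_sinh w).div (Real.hasDerivAt_cosh w) hc).const_add 1).div_const 2
  have htanh : Real.sinh / Real.cosh = Real.tanh :=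
    funext fun x => (Real.tanh_eq_sinh_div_cosh x).symm
  rw [htanh] at h
  refine h.congr_deriv ?_
  rw [← sq, ← sq, Real.cosh_sq_sub_sinh_sq w]
  field_simp

lemma image_one_add_tanh_div_two : (fun x => (1 + Real.tanh x) / 2) '' univ = Ioo 0 1 := by
  ext y
  constructor
  · rintro ⟨w, -, rfl⟩
    exact ⟨by linarith [Real.neg_one_lt_tanh w], by linarith [Real.tanh_lt_one w]⟩
  · rintro ⟨h0, h1⟩
    obtain ⟨w, -, hw⟩ := Real.tanh_surjOn
      (show 2 * y - 1 ∈ Ioo (-1 : ℝ) 1 from ⟨by linarith, by linarith⟩)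
    exact ⟨w, trivial, by simp only [hw]; ring⟩

lemma one_add_tanh_div_two (w : ℝ) : (1 + Real.tanh w) / 2 = Real.exp w / (2 * Real.cosh w) := by
  have hc := (Real.cosh_pos w).ne'
  rw [Real.tanh_eq_sinh_div_cosh, ← Real.cosh_add_sinh w]
  field_simp

lemma one_sub_one_add_tanh_div_two (w : ℝ) :
    1 - (1 + Real.tanh w) / 2 = Real.exp (-w) / (2 * Real.cosh w) := by
  have hc := (Real.cosh_pos w).ne'
  rw [Real.tanh_eq_sinh_div_cosh, ← Real.cosh_sub_sinh w]
  field_simp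
  ring

lemma ofReal_exp_div_two_cosh_cpow (v w : ℝ) (s : ℂ) :
    ((Real.exp v / (2 * Real.cosh w) : ℝ) : ℂ) ^ s =
      Complex.exp (s * (v - Real.log (2 * Real.cosh w))) := by
  have hc := Real.cosh_pos w
  rw [ofReal_cpow_eq_cexp_mul_log (by positivity),
    Real.log_div (Real.exp_pos v).ne' (by positivity), Real.log_exp]
  push_cast
  rfl

/-- The substitution `x = (1 + tanh w) / 2 = eʷ / (2 cosh w)` maps `ℝ` onto `(0, 1)`, with
`1 - x = e⁻ʷ / (2 cosh w)` and `dx = 2 x (1 - x) dw`. -/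
theorem integral_cexp_mul_one_div_cosh_cpow (a b : ℂ) :
    ∫ w : ℝ, Complex.exp ((a - b) * w) * (1 / (Real.cosh w : ℂ)) ^ (a + b) =
      2 ^ (a + b - 1) * Complex.betaIntegral a b := by
  have hinj : InjOn (fun x => (1 + Real.tanh x) / 2) univ :=
    fun x _ y _ h => Real.tanh_injective (by simpa using h)
  rw [Complex.betaIntegral, intervalIntegral.integral_of_le zero_le_one,
    integral_Ioc_eq_integral_Ioo, ← image_one_add_tanh_div_two,
    integral_image_eq_integral_abs_deriv_smul MeasurableSet.univ
      (fun w _ => (hasDerivAt_one_add_tanh_div_two w).hasDerivWithinAt) hinj,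
    setIntegral_univ, ← integral_const_mul]
  congr 1 with w
  have hc := Real.cosh_pos w
  have hdx : ((|2 / (2 * Real.cosh w) ^ 2| : ℝ) : ℂ) =
      Complex.exp (Real.log 2 - 2 * Real.log (2 * Real.cosh w)) := by
    rw [abs_of_pos (by positivity), ← Real.exp_log (show 0 < 2 / (2 * Real.cosh w) ^ 2 by
      positivity), Complex.ofReal_exp, Real.log_div two_ne_zero (by positivity), Real.log_pow]
    push_cast
    rfl
  have hsech : (1 / (Real.cosh w : ℂ)) ^ (a + b) =
      Complex.exp ((a + b) * (Real.log 2 - Real.log (2 * Real.cosh w))) := by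
    rw [show (1 / (Real.cosh w : ℂ)) = ((2 / (2 * Real.cosh w) : ℝ) : ℂ) by
        push_cast; field_simp,
      ofReal_cpow_eq_cexp_mul_log (by positivity), Real.log_div two_ne_zero (by positivity)]
    push_cast
    rfl
  have htwo : (2 : ℂ) ^ (a + b - 1) = Complex.exp ((a + b - 1) * Real.log 2) := by
    rw [← ofReal_cpow_eq_cexp_mul_log two_pos]
    norm_num
  rw [Complex.real_smul, show (1 : ℂ) - ((1 + Real.tanh w) / 2 : ℝ) =
      ((1 - (1 + Real.tanh w) / 2 : ℝ) : ℂ) by push_cast; ring,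
    one_sub_one_add_tanh_div_two, one_add_tanh_div_two, ofReal_exp_div_two_cosh_cpow,
    ofReal_exp_div_two_cosh_cpow, hdx, hsech, htwo]
  simp only [← Complex.exp_add]
  congr 1
  push_cast
  ring

theorem integral_Ioi_cos_mul_one_div_cosh_cpow {s : ℂ} (hs : 0 < s.re) (u : ℝ) :
    ∫ w in Ioi (0 : ℝ), (Real.cos (u * w) : ℂ) * (1 / (Real.cosh w : ℂ)) ^ s =
      2 ^ (s - 2) * Complex.betaIntegral ((s + u * Complex.I) / 2) ((s - u * Complex.I) / 2) := by
  set f : ℝ → ℂ := fun w => Complex.exp (u * Complex.I * w) * (1 / (Real.cosh w : ℂ)) ^ s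
  have hf : Integrable f := (integrable_one_div_cosh_cpow hs).bdd_mul (c := 1) (by fun_prop)
    (ae_of_all _ fun w => by
      rw [mul_right_comm, ← Complex.ofReal_mul, Complex.norm_exp_ofReal_mul_I])
  have hsym : ∀ w : ℝ,
      f w + f (-w) = 2 * ((Real.cos (u * w) : ℂ) * (1 / (Real.cosh w : ℂ)) ^ s) := by
    intro w
    simp only [f, Real.cosh_neg, Complex.ofReal_neg, Complex.ofReal_cos, Complex.ofReal_mul,
      Complex.cos]
    ring_nf
  have hbeta :=
    integral_cexp_mul_one_div_cosh_cpow ((s + u * Complex.I) / 2) ((s - u * Complex.I) / 2)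
  rw [show (s + u * Complex.I) / 2 - (s - u * Complex.I) / 2 = u * Complex.I by ring,
    show (s + u * Complex.I) / 2 + (s - u * Complex.I) / 2 = s by ring,
    show s - 1 = (s - 2) + 1 by ring, Complex.cpow_add _ _ two_ne_zero, Complex.cpow_one] at hbeta
  have hdouble :
      2 * ∫ w in Ioi (0 : ℝ), (Real.cos (u * w) : ℂ) * (1 / (Real.cosh w : ℂ)) ^ s =
        ∫ w : ℝ, f w := by
    rw [integral_eq_integral_Ioi_add_comp_neg hf, ← integral_const_mul]
    exact setIntegral_congr_fun measurableSet_Ioi fun w _ => (hsym w).symm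
  rw [← mul_right_inj' (two_ne_zero' ℂ), hdouble, hbeta]
  ring

theorem mellin_Kiu (u : ℝ) {s : ℂ} (hs : 0 < s.re) :
    mellin (fun r => (Kiu u r : ℂ)) s = 2 ^ (s - 2) *
      Complex.Gamma ((s + u * Complex.I) / 2) * Complex.Gamma ((s - u * Complex.I) / 2) := by
  have hK : (fun r => (Kiu u r : ℂ)) = fun r : ℝ =>
      ∫ w in Ioi (0 : ℝ), (Real.cos (u * w) : ℂ) * Complex.exp (-(Real.cosh w * r)) := by
    funext r
    rw [Kiu, ← integral_complex_ofReal]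
    congr 1 with w
    push_cast
    ring_nf
  have hint : IntegrableOn (fun w => (Real.cos (u * w) : ℂ) * (1 / (Real.cosh w : ℂ)) ^ s)
      (Ioi 0) :=
    ((integrable_one_div_cosh_cpow hs).bdd_mul (c := 1) (by fun_prop)
      (ae_of_all _ fun w => by
        rw [Complex.norm_real, Real.norm_eq_abs]; exact Real.abs_cos_le_one _)).integrableOn
  have hre : ∀ v : ℝ, 0 < ((s + v * Complex.I) / 2).re := fun v => by
    simpa using half_pos hs
  rw [hK, mellin_integral_mul_cexp_neg_mul (by fun_prop) (by fun_prop) Real.cosh_pos hs hint,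
    integral_Ioi_cos_mul_one_div_cosh_cpow hs, mul_assoc,
    Complex.Gamma_mul_Gamma_eq_betaIntegral (hre u) (by simpa [sub_eq_add_neg] using hre (-u)),
    show (s + u * Complex.I) / 2 + (s - u * Complex.I) / 2 = s by ring]
  ring

lemma Gamma_mul_Gamma_conj (z : ℂ) :
    Complex.Gamma z * Complex.Gamma ((starRingEnd ℂ) z) = ‖Complex.Gamma z‖ ^ 2 := by
  rw [Complex.Gamma_conj, Complex.mul_conj']

/-- Mellin transform of `f_u`: for `Re t > 0`,
`∫_ℝ e^{tx} f_u(x) dx = 2^{t-2} Γ((t+iu)/2) Γ((t-iu)/2)`, with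
`2^{t-2} = exp((t-2) log 2)`; for real `t > 0` the right-hand side equals
`2^{t-2} |Γ((t+iu)/2)|²`. -/
theorem besselF_mellin (t : ℂ) (ht : 0 < t.re) (u : ℝ) :
    (∫ x : ℝ, Complex.exp (t * (x : ℂ)) * ((besselF u x : ℝ) : ℂ)) =
      Complex.exp ((t - 2) * ((Real.log 2 : ℝ) : ℂ)) *
        Complex.Gamma ((t + (u : ℂ) * Complex.I) / 2) *
        Complex.Gamma ((t - (u : ℂ) * Complex.I) / 2) ∧
    ∀ s : ℝ, 0 < s →
      Complex.exp (((s : ℂ) - 2) * ((Real.log 2 : ℝ) : ℂ)) *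
          Complex.Gamma (((s : ℂ) + (u : ℂ) * Complex.I) / 2) *
          Complex.Gamma (((s : ℂ) - (u : ℂ) * Complex.I) / 2) =
        (((2 : ℝ) ^ (s - 2) *
          ‖Complex.Gamma (((s : ℂ) + (u : ℂ) * Complex.I) / 2)‖ ^ 2 : ℝ) : ℂ) := by
  refine ⟨?_, fun s _ => ?_⟩
  · rw [← ofReal_cpow_eq_cexp_mul_log two_pos, Complex.ofReal_ofNat, ← mellin_Kiu u ht]
    exact integral_cexp_mul_comp_exp (fun r => (Kiu u r : ℂ)) t
  · have hconj :
        ((s : ℂ) - u * Complex.I) / 2 = (starRingEnd ℂ) ((s + u * Complex.I) / 2) := by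
      rw [map_div₀, map_add, map_mul, Complex.conj_ofReal, Complex.conj_ofReal, Complex.conj_I,
        map_ofNat]
      ring
    rw [← ofReal_cpow_eq_cexp_mul_log two_pos, hconj, mul_assoc, Gamma_mul_Gamma_conj,
      Complex.ofReal_mul, Complex.ofReal_cpow zero_le_two]
    push_cast
    ring
end
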